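/- Equivalence lemma, upper bound: there is a universal constant C such that for every score function φ, every (possibly partial) function f : X → {0,1} with X ⊆ {0,1}^m, every probability distribution μ on X, and every score parameter γ with φ(μ(f⁻¹(1))) ≤ γ ≤ 1 (i.e., γ at least the score of the trivial zero-query algorithm), there exists a discount factor α* > 0 for which sR̄̄_γ^μ(f) ≤ (C/α*)·ln(γ / DS_{α*}^μ(f)). -/

import Mathlib

open Finset

/-- Deterministic decision trees querying coordinates `i : ι` of inputs `x : ι → Bool`,
with leaves labelled by elements of `L`. -/
inductive DTree (ι : Type) (L : Type) : Type
  | leaf (lab : L) : DTree ι L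
  | node (i : ι) (t0 : DTree ι L) (t1 : DTree ι L) : DTree ι L

namespace DTree

variable {ι L : Type}

/-- Output label at the leaf reached by input `x`. -/
def out : DTree ι L → (ι → Bool) → L
  | .leaf lab, _ => lab
  | .node i t0 t1, x => if x i then out t1 x else out t0 x

/-- Number of queries made on input `x` (depth of the leaf reached by `x`). -/
def cost : DTree ι L → (ι → Bool) → ℕ
  | .leaf _, _ => 0
  | .node i t0 t1, x => (if x i then cost t1 x else cost t0 x) + 1

/-- Maximum leaf depth of the tree. -/
def depth : DTree ι L → ℕ
  | .leaf _ => 0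
  | .node _ t0 t1 => max (depth t0) (depth t1) + 1

/-- The set of inputs reaching the same leaf as input `x`. -/
def leafSet : DTree ι L → (ι → Bool) → Set (ι → Bool)
  | .leaf _, _ => Set.univ
  | .node i t0 t1, x => {y | y i = x i} ∩ (if x i then leafSet t1 x else leafSet t0 x)

/-- Every leaf label of the tree satisfies the predicate `P`. -/
def allLabels : DTree ι L → (L → Prop) → Prop
  | .leaf lab, P => P lab
  | .node _ t0 t1, P => allLabels t0 P ∧ allLabels t1 P

end DTree

/-- A randomized query algorithm: a finitely supported probability distribution over
deterministic decision trees. -/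
structure RandAlg (ι : Type) (L : Type) where
  k : ℕ
  p : Fin k → ℝ
  T : Fin k → DTree ι L
  p_nonneg : ∀ j, 0 ≤ p j
  p_sum : ∑ j, p j = 1

/-- A probability distribution on inputs, supported inside the domain `X`. -/
structure InputDist (ι : Type) [Fintype ι] [DecidableEq ι] (X : Set (ι → Bool)) where
  μ : (ι → Bool) → ℝ
  nonneg : ∀ x, 0 ≤ μ x
  sum_one : ∑ x, μ x = 1
  supp : ∀ x, x ∉ X → μ x = 0

/-- A score function `φ : [0,1] → [1/2,1]`. -/
structure ScoreFun where
  φ : ℝ → ℝ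
  continuous : ContinuousOn φ (Set.Icc 0 1)
  half_le : ∀ p ∈ Set.Icc (0:ℝ) 1, 1 / 2 ≤ φ p
  le_one : ∀ p ∈ Set.Icc (0:ℝ) 1, φ p ≤ 1
  map_zero : φ 0 = 1
  map_one : φ 1 = 1
  map_half : φ (1 / 2) = 1 / 2
  symm : ∀ p ∈ Set.Icc (0:ℝ) 1, φ (1 - p) = φ p
  mono : MonotoneOn φ (Set.Icc (1 / 2) 1)

section Defs

variable {ι L : Type} [Fintype ι] [DecidableEq ι]

/-- Mass of a set of inputs under the weight function `μ`. -/
noncomputable def mass (μ : (ι → Bool) → ℝ) (S : Set (ι → Bool)) : ℝ :=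
  ∑ x, Set.indicator S μ x

/-- Score `φ(μ(ℓ₁)/μ(ℓ))` of the leaf `ℓ` reached by `x` in the tree `t`. -/
noncomputable def leafScore (S : ScoreFun) (f : (ι → Bool) → Bool) (μ : (ι → Bool) → ℝ)
    (t : DTree ι L) (x : ι → Bool) : ℝ :=
  S.φ (mass μ (t.leafSet x ∩ {y | f y = true}) / mass μ (t.leafSet x))

/-- Score of a randomized algorithm: `E_{D∼R, x∼μ}[score(D(x))]`. -/
noncomputable def algScore (S : ScoreFun) (f : (ι → Bool) → Bool) (μ : (ι → Bool) → ℝ)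
    (R : RandAlg ι L) : ℝ :=
  ∑ j, R.p j * ∑ x, μ x * leafScore S f μ (R.T j) x

/-- Expected cost `E_{D∼R, x∼μ}[cost(D(x))]`. -/
noncomputable def expCost (μ : (ι → Bool) → ℝ) (R : RandAlg ι L) : ℝ :=
  ∑ j, R.p j * ∑ x, μ x * ((R.T j).cost x : ℝ)

/-- Score-weighted cost `E[score(D(x))·cost(D(x))] / E[score(D(x))]`. -/
noncomputable def scost (S : ScoreFun) (f : (ι → Bool) → Bool) (μ : (ι → Bool) → ℝ)
    (R : RandAlg ι L) : ℝ :=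
  (∑ j, R.p j * ∑ x, μ x * (leafScore S f μ (R.T j) x * ((R.T j).cost x : ℝ))) /
    algScore S f μ R

/-- Discounted score `E[score(D(x))·e^{-α·cost(D(x))}]`. -/
noncomputable def dScore (S : ScoreFun) (f : (ι → Bool) → Bool) (μ : (ι → Bool) → ℝ)
    (α : ℝ) (R : RandAlg ι L) : ℝ :=
  ∑ j, R.p j * ∑ x, μ x *
    (leafScore S f μ (R.T j) x * Real.exp (-(α * ((R.T j).cost x : ℝ))))

/-- Maximum discounted score `DS_α^μ(f)`. -/
noncomputable def DS (S : ScoreFun) (f : (ι → Bool) → Bool) (μ : (ι → Bool) → ℝ)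
    (α : ℝ) : ℝ :=
  ⨆ R : RandAlg ι Unit, dScore S f μ α R

/-- Distributional score-weighted query complexity `sR̄̄_γ^μ(f)`. -/
noncomputable def sRdist (S : ScoreFun) (f : (ι → Bool) → Bool) (μ : (ι → Bool) → ℝ)
    (γ : ℝ) : ℝ :=
  sInf {c | ∃ R : RandAlg ι Unit, γ ≤ algScore S f μ R ∧ scost S f μ R = c}

/-- Distributional query complexity `R̄̄_γ^μ(f)` (expected cost). -/
noncomputable def Rdist (S : ScoreFun) (f : (ι → Bool) → Bool) (μ : (ι → Bool) → ℝ)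
    (γ : ℝ) : ℝ :=
  sInf {c | ∃ R : RandAlg ι Unit, γ ≤ algScore S f μ R ∧ expCost μ R = c}

/-- Maximum score-weighted distributional query complexity `sR̄̄_γ(f)`. -/
noncomputable def sRmax (S : ScoreFun) (X : Set (ι → Bool)) (f : (ι → Bool) → Bool)
    (γ : ℝ) : ℝ :=
  ⨆ μ : InputDist ι X, sRdist S f μ.μ γ

/-- Maximum distributional query complexity `R̄̄_γ(f)`. -/
noncomputable def Rmax (S : ScoreFun) (X : Set (ι → Bool)) (f : (ι → Bool) → Bool)
    (γ : ℝ) : ℝ :=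
  ⨆ μ : InputDist ι X, Rdist S f μ.μ γ

/-- Success-probability score `max{μ(ℓ₀),μ(ℓ₁)}/μ(ℓ)` of the leaf reached by `x`. -/
noncomputable def succLeafScore (f : (ι → Bool) → Bool) (μ : (ι → Bool) → ℝ)
    (t : DTree ι L) (x : ι → Bool) : ℝ :=
  max (mass μ (t.leafSet x ∩ {y | f y = false})) (mass μ (t.leafSet x ∩ {y | f y = true})) /
    mass μ (t.leafSet x)

/-- Success-probability score of a randomized algorithm. -/
noncomputable def succAlgScore (f : (ι → Bool) → Bool) (μ : (ι → Bool) → ℝ)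
    (R : RandAlg ι L) : ℝ :=
  ∑ j, R.p j * ∑ x, μ x * succLeafScore f μ (R.T j) x

/-- Distributional query complexity with the success-probability score. -/
noncomputable def succRdist (f : (ι → Bool) → Bool) (μ : (ι → Bool) → ℝ) (γ : ℝ) : ℝ :=
  sInf {c | ∃ R : RandAlg ι Unit, γ ≤ succAlgScore f μ R ∧ expCost μ R = c}

/-- Maximum distributional query complexity `R̄̄_γ(f)` with the success-probability score. -/
noncomputable def succRmax (X : Set (ι → Bool)) (f : (ι → Bool) → Bool) (γ : ℝ) : ℝ :=
  ⨆ μ : InputDist ι X, succRdist f μ.μ γ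

/-- The fraction `q = μ(ℓ₁)/μ(ℓ)` at the leaf reached by `x`. -/
noncomputable def leafBias (f : (ι → Bool) → Bool) (μ : (ι → Bool) → ℝ)
    (t : DTree ι L) (x : ι → Bool) : ℝ :=
  mass μ (t.leafSet x ∩ {y | f y = true}) / mass μ (t.leafSet x)

/-- Hellinger loss `E[2·√(q(1-q))]` of a randomized algorithm. -/
noncomputable def helLossAlg (f : (ι → Bool) → Bool) (μ : (ι → Bool) → ℝ)
    (R : RandAlg ι L) : ℝ :=
  ∑ j, R.p j * ∑ x, μ x *
    (2 * Real.sqrt (leafBias f μ (R.T j) x * (1 - leafBias f μ (R.T j) x)))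

/-- Hellinger score `E[1 - √(q(1-q))]` of a randomized algorithm. -/
noncomputable def helScoreAlg (f : (ι → Bool) → Bool) (μ : (ι → Bool) → ℝ)
    (R : RandAlg ι L) : ℝ :=
  ∑ j, R.p j * ∑ x, μ x *
    (1 - Real.sqrt (leafBias f μ (R.T j) x * (1 - leafBias f μ (R.T j) x)))

/-- `R̄̄_{Hel↓,ε}(f)`: maximum distributional complexity at Hellinger loss `ε`. -/
noncomputable def RmaxHelLoss (X : Set (ι → Bool)) (f : (ι → Bool) → Bool) (ε : ℝ) : ℝ :=
  ⨆ μ : InputDist ι X,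
    sInf {c | ∃ R : RandAlg ι Unit, helLossAlg f μ.μ R ≤ ε ∧ expCost μ.μ R = c}

/-- `R̄̄_{Hel,γ}(f)`: maximum distributional complexity at Hellinger score `γ`. -/
noncomputable def RmaxHel (X : Set (ι → Bool)) (f : (ι → Bool) → Bool) (γ : ℝ) : ℝ :=
  ⨆ μ : InputDist ι X,
    sInf {c | ∃ R : RandAlg ι Unit, γ ≤ helScoreAlg f μ.μ R ∧ expCost μ.μ R = c}

/-- Binary entropy function. -/
noncomputable def binEnt (p : ℝ) : ℝ :=
  -(p * Real.logb 2 p) - (1 - p) * Real.logb 2 (1 - p)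

/-- Exponential-entropy score `E[1 - (1/2)·2^{-h(q)}]` of a randomized algorithm. -/
noncomputable def entScoreAlg (f : (ι → Bool) → Bool) (μ : (ι → Bool) → ℝ)
    (R : RandAlg ι L) : ℝ :=
  ∑ j, R.p j * ∑ x, μ x *
    (1 - (1 / 2) * (2:ℝ) ^ (-(binEnt (leafBias f μ (R.T j) x))))

/-- `R̄̄_{Ent,γ}(f)`: maximum distributional complexity at exponential-entropy score `γ`. -/
noncomputable def RmaxEnt (X : Set (ι → Bool)) (f : (ι → Bool) → Bool) (γ : ℝ) : ℝ :=
  ⨆ μ : InputDist ι X,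
    sInf {c | ∃ R : RandAlg ι Unit, γ ≤ entScoreAlg f μ.μ R ∧ expCost μ.μ R = c}

end Defs

section WorstCase

variable {ι L : Type}

open Classical in
/-- Worst-case randomized query complexity for a generic task: minimum, over randomized
algorithms whose leaf labels satisfy `labelOK` and which on every input `x ∈ X` output a
label `z` with `good x z` with probability at least `δ`, of the maximum leaf depth over
the trees in the support. -/
noncomputable def RwcTask (X : Set (ι → Bool)) (good : (ι → Bool) → L → Prop)
    (labelOK : L → Prop) (δ : ℝ) : ℕ :=
  sInf {d : ℕ | ∃ R : RandAlg ι L,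
    (∀ j, R.p j ≠ 0 → (R.T j).allLabels labelOK) ∧
    (∀ x ∈ X, δ ≤ ∑ j, if good x ((R.T j).out x) then R.p j else 0) ∧
    ∀ j, R.p j ≠ 0 → (R.T j).depth ≤ d}

/-- Worst-case randomized query complexity `R_δ(f)` of a (partial) Boolean function. -/
noncomputable def Rwc (X : Set (ι → Bool)) (f : (ι → Bool) → Bool) (δ : ℝ) : ℕ :=
  RwcTask X (fun x b => b = f x) (fun _ : Bool => True) δ

end WorstCase

section Product

variable {m n : ℕ} {L : Type}

/-- The `i`-th block of an input to the `n`-fold direct product. -/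
def block (x : Fin n × Fin m → Bool) (i : Fin n) : Fin m → Bool := fun j => x (i, j)

/-- The product domain `Xⁿ`. -/
def Xpow (n : ℕ) (X : Set (Fin m → Bool)) : Set (Fin n × Fin m → Bool) :=
  {x | ∀ i, block x i ∈ X}

/-- The `n`-fold direct product `fⁿ`. -/
def fpow (f : (Fin m → Bool) → Bool) (x : Fin n × Fin m → Bool) : Fin n → Bool :=
  fun i => f (block x i)

/-- The product distribution `μⁿ`. -/
noncomputable def prodMu (μ : (Fin m → Bool) → ℝ) (x : Fin n × Fin m → Bool) : ℝ :=
  ∏ i, μ (block x i)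

/-- The `i`-th factor `ℓ^(i)` of the (product) leaf reached by `x` in a decision tree for `fⁿ`. -/
def blockSet (t : DTree (Fin n × Fin m) L) (x : Fin n × Fin m → Bool) (i : Fin n) :
    Set (Fin m → Bool) :=
  {y | (fun q : Fin n × Fin m => if q.1 = i then y q.2 else x q) ∈ t.leafSet x}

/-- Score of a leaf of a tree for `fⁿ` under `μⁿ`: the product of the scores of its factors. -/
noncomputable def prodLeafScore (S : ScoreFun) (f : (Fin m → Bool) → Bool)
    (μ : (Fin m → Bool) → ℝ) (t : DTree (Fin n × Fin m) L) (x : Fin n × Fin m → Bool) : ℝ :=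
  ∏ i, S.φ (mass μ (blockSet t x i ∩ {y | f y = true}) / mass μ (blockSet t x i))

/-- Score of a randomized algorithm for `fⁿ` under `μⁿ`. -/
noncomputable def algScoreN (S : ScoreFun) (f : (Fin m → Bool) → Bool)
    (μ : (Fin m → Bool) → ℝ) (R : RandAlg (Fin n × Fin m) L) : ℝ :=
  ∑ j, R.p j * ∑ x, prodMu μ x * prodLeafScore S f μ (R.T j) x

/-- Score-weighted cost of a randomized algorithm for `fⁿ` under `μⁿ`. -/
noncomputable def scostN (S : ScoreFun) (f : (Fin m → Bool) → Bool)
    (μ : (Fin m → Bool) → ℝ) (R : RandAlg (Fin n × Fin m) L) : ℝ :=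
  (∑ j, R.p j * ∑ x, prodMu μ x * (prodLeafScore S f μ (R.T j) x * ((R.T j).cost x : ℝ))) /
    algScoreN S f μ R

/-- Discounted score of a randomized algorithm for `fⁿ` under `μⁿ`. -/
noncomputable def dScoreN (S : ScoreFun) (f : (Fin m → Bool) → Bool)
    (μ : (Fin m → Bool) → ℝ) (α : ℝ) (R : RandAlg (Fin n × Fin m) L) : ℝ :=
  ∑ j, R.p j * ∑ x, prodMu μ x *
    (prodLeafScore S f μ (R.T j) x * Real.exp (-(α * ((R.T j).cost x : ℝ))))

/-- Maximum discounted score `DS_α^{μⁿ}(fⁿ)`. -/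
noncomputable def DSN (S : ScoreFun) (f : (Fin m → Bool) → Bool)
    (μ : (Fin m → Bool) → ℝ) (α : ℝ) (n : ℕ) : ℝ :=
  ⨆ R : RandAlg (Fin n × Fin m) Unit, dScoreN S f μ α R

/-- Distributional score-weighted query complexity `sR̄̄_γ^{μⁿ}(fⁿ)`. -/
noncomputable def sRdistN (S : ScoreFun) (f : (Fin m → Bool) → Bool)
    (μ : (Fin m → Bool) → ℝ) (γ : ℝ) (n : ℕ) : ℝ :=
  sInf {c | ∃ R : RandAlg (Fin n × Fin m) Unit,
    γ ≤ algScoreN S f μ R ∧ scostN S f μ R = c}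

/-- Worst-case randomized query complexity `R_δ(fⁿ)` of computing `fⁿ` exactly. -/
noncomputable def RwcN (X : Set (Fin m → Bool)) (f : (Fin m → Bool) → Bool)
    (n : ℕ) (δ : ℝ) : ℕ :=
  RwcTask (Xpow n X) (fun x z => z = fpow f x) (fun _ : Fin n → Bool => True) δ

/-- Success-probability score `max_z μ(ℓ ∩ (fⁿ)⁻¹(z))/μ(ℓ)` of a leaf of a tree for `fⁿ`
under an arbitrary distribution `μ` on `Xⁿ`. -/
noncomputable def succLeafScoreN (f : (Fin m → Bool) → Bool)
    (μ : (Fin n × Fin m → Bool) → ℝ) (t : DTree (Fin n × Fin m) L)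
    (x : Fin n × Fin m → Bool) : ℝ :=
  (⨆ z : Fin n → Bool, mass μ (t.leafSet x ∩ {y | fpow f y = z})) / mass μ (t.leafSet x)

/-- Success-probability score of a randomized algorithm for `fⁿ`. -/
noncomputable def succAlgScoreN (f : (Fin m → Bool) → Bool)
    (μ : (Fin n × Fin m → Bool) → ℝ) (R : RandAlg (Fin n × Fin m) L) : ℝ :=
  ∑ j, R.p j * ∑ x, μ x * succLeafScoreN f μ (R.T j) x

/-- Score-weighted cost of a randomized algorithm for `fⁿ` (success-probability score). -/
noncomputable def succScostN (f : (Fin m → Bool) → Bool)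
    (μ : (Fin n × Fin m → Bool) → ℝ) (R : RandAlg (Fin n × Fin m) L) : ℝ :=
  (∑ j, R.p j * ∑ x, μ x * (succLeafScoreN f μ (R.T j) x * ((R.T j).cost x : ℝ))) /
    succAlgScoreN f μ R

/-- Maximum score-weighted distributional query complexity `sR̄̄_δ(fⁿ)`
(success-probability score). -/
noncomputable def succSRmaxN (X : Set (Fin m → Bool)) (f : (Fin m → Bool) → Bool)
    (n : ℕ) (δ : ℝ) : ℝ :=
  ⨆ μ : InputDist (Fin n × Fin m) (Xpow n X),
    sInf {c | ∃ R : RandAlg (Fin n × Fin m) Unit,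
      δ ≤ succAlgScoreN f μ.μ R ∧ succScostN f μ.μ R = c}

/-- Worst-case randomized query complexity of the list-decoding task `LD_ℓⁿ ∘ f`. -/
noncomputable def RwcLD (X : Set (Fin m → Bool)) (f : (Fin m → Bool) → Bool)
    (n ℓ : ℕ) (δ : ℝ) : ℕ :=
  RwcTask (Xpow n X) (fun x S => fpow f x ∈ S)
    (fun S : Finset (Fin n → Bool) => S.card = 2 ^ (n - ℓ)) δ

open Classical in
/-- Worst-case randomized query complexity of the threshold task `Thr_kⁿ ∘ f`. -/
noncomputable def RwcThr (X : Set (Fin m → Bool)) (f : (Fin m → Bool) → Bool)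
    (n k : ℕ) (δ : ℝ) : ℕ :=
  RwcTask (Xpow n X)
    (fun x z => k ≤ (Finset.univ.filter fun i => z i = fpow f x i).card)
    (fun _ : Fin n → Bool => True) δ

open Classical in
/-- Worst-case randomized query complexity of the labelled threshold task `Label_kⁿ ∘ f`. -/
noncomputable def RwcLabel (X : Set (Fin m → Bool)) (f : (Fin m → Bool) → Bool)
    (n k : ℕ) (δ : ℝ) : ℕ :=
  RwcTask (Xpow n X)
    (fun x z => ∀ i b, z i = some b → fpow f x i = b)
    (fun z : Fin n → Option Bool =>
      (Finset.univ.filter fun i => (z i).isSome).card = k) δ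

end Product

/-!
Write `B(x) = Rdist x` for the least expected cost of reaching score `x`, and `γ₀` for the score
of the zero-query algorithm. Since scores lie in `[1/2, 1]`, `sR̄̄_γ ≤ 2 B(γ)`. Mixing algorithms
shows that `B` is convex on `(-∞, 1]`; `B(γ₀) = 0`; and the left slopes of `B` are bounded, because
completing every impure leaf by querying all coordinates reaches score `1` at extra cost
`O(1 - x)` (impure leaves have scores bounded away from `1`). So `B` has a supporting line
`B(γ) + σ (w - γ)` at `γ`.

Stopping a tree at a geometric depth with ratio `e^{-α}` gives an algorithm of some score `w`
whose expected cost `c` satisfies `ds_α ≤ w - (1 - e^{-α}) c / 2`. Choosing `1 - e^{-α} = 2/σ`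
and using `c ≥ B(w) ≥ B(γ) + σ (w - γ)` yields `DS_α ≤ γ - B(γ)/σ`, hence
`ln (γ / DS_α) ≥ B(γ)/σ ≥ α B(γ)/4` once `σ > 4`. If instead `B(γ) ≤ 4 (γ - γ₀)` (which is the
case whenever `σ ≤ 4`), then `α = 1` works, because `DS_1 ≤ max(γ₀, e⁻¹) = γ₀`.
-/

section Mass

variable {ι : Type} [Fintype ι] [DecidableEq ι] {μ : (ι → Bool) → ℝ}

theorem mass_nonneg (hμ : ∀ x, 0 ≤ μ x) (A : Set (ι → Bool)) : 0 ≤ mass μ A :=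
  Finset.sum_nonneg fun x _ => Set.indicator_nonneg (fun y _ => hμ y) x

theorem mass_mono (hμ : ∀ x, 0 ≤ μ x) {A B : Set (ι → Bool)} (h : A ⊆ B) :
    mass μ A ≤ mass μ B :=
  Finset.sum_le_sum fun x _ => Set.indicator_le_indicator_of_subset h hμ x

@[simp] theorem mass_univ : mass μ Set.univ = ∑ x, μ x := by simp [mass]

@[simp] theorem mass_empty : mass μ ∅ = 0 := by simp [mass]

@[simp] theorem mass_singleton (x : ι → Bool) : mass μ {x} = μ x := by
  simp [mass, Set.indicator_apply]

end Mass

namespace DTree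

variable {ι L L' : Type}

theorem mem_leafSet_self (t : DTree ι L) (x : ι → Bool) : x ∈ t.leafSet x := by
  induction t with
  | leaf => trivial
  | node i t₀ t₁ ih₀ ih₁ => cases hx : x i <;> simp [leafSet, hx, ih₀, ih₁]

theorem cost_le_depth (t : DTree ι L) (x : ι → Bool) : t.cost x ≤ t.depth := by
  induction t with
  | leaf => simp [cost]
  | node i t₀ t₁ ih₀ ih₁ => cases hx : x i <;> simp [cost, depth, hx] <;> omega

def trunc [Inhabited L] : ℕ → DTree ι L → DTree ι L
  | 0, _ => .leaf default
  | _ + 1, .leaf l => .leaf l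
  | d + 1, .node i t₀ t₁ => .node i (trunc d t₀) (trunc d t₁)

theorem cost_trunc [Inhabited L] (d : ℕ) (t : DTree ι L) (x : ι → Bool) :
    (trunc d t).cost x = min d (t.cost x) := by
  induction d generalizing t with
  | zero => simp [trunc, cost]
  | succ d ih =>
    cases t with
    | leaf => simp [trunc, cost]
    | node i t₀ t₁ => cases hx : x i <;> simp [trunc, cost, hx, ih]

theorem leafSet_trunc [Inhabited L] {d : ℕ} {t : DTree ι L} {x : ι → Bool}
    (h : t.cost x ≤ d) : (trunc d t).leafSet x = t.leafSet x := by
  induction d generalizing t with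
  | zero => cases t with
    | leaf => rfl
    | node => simp [cost] at h
  | succ d ih =>
    cases t with
    | leaf => rfl
    | node i t₀ t₁ =>
      cases hx : x i <;> simp only [cost, hx, Bool.false_eq_true, if_true, if_false] at h <;>
        simp [trunc, leafSet, hx, ih (Nat.le_of_succ_le_succ h)]

def queryAll : List ι → DTree ι Unit
  | [] => .leaf ()
  | i :: l => .node i (queryAll l) (queryAll l)

theorem cost_queryAll (l : List ι) (x : ι → Bool) : (queryAll l).cost x = l.length := by
  induction l with
  | nil => rfl
  | cons i l ih => simp [queryAll, cost, ih]

theorem leafSet_queryAll (l : List ι) (x : ι → Bool) :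
    (queryAll l).leafSet x = {y | ∀ i ∈ l, y i = x i} := by
  induction l with
  | nil => simp [queryAll, leafSet]
  | cons i l ih =>
    ext y
    simp [queryAll, leafSet, ih]

noncomputable def fullTree [Fintype ι] : DTree ι Unit := queryAll Finset.univ.toList

theorem cost_fullTree [Fintype ι] (x : ι → Bool) :
    (fullTree : DTree ι Unit).cost x = Fintype.card ι := by
  simp [fullTree, cost_queryAll]

theorem leafSet_fullTree [Fintype ι] (x : ι → Bool) :
    (fullTree : DTree ι Unit).leafSet x = {x} := by
  ext y
  simp [fullTree, leafSet_queryAll, funext_iff]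

/-- Replaces each leaf of `t` by `g A`, where `A` is the initial set intersected with the set of
inputs reaching that leaf. -/
def graftAux (g : Set (ι → Bool) → DTree ι L') : Set (ι → Bool) → DTree ι L → DTree ι L'
  | A, .leaf _ => g A
  | A, .node i t₀ t₁ =>
      .node i (graftAux g (A ∩ {y | y i = false}) t₀) (graftAux g (A ∩ {y | y i = true}) t₁)

def graft (t : DTree ι L) (g : Set (ι → Bool) → DTree ι L') : DTree ι L' :=
  graftAux g Set.univ t

theorem leafSet_graftAux (g : Set (ι → Bool) → DTree ι L') (t : DTree ι L) (x : ι → Bool)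
    (A : Set (ι → Bool)) :
    (graftAux g A t).leafSet x = t.leafSet x ∩ (g (A ∩ t.leafSet x)).leafSet x := by
  induction t generalizing A with
  | leaf => simp [graftAux, leafSet]
  | node i t₀ t₁ ih₀ ih₁ =>
    cases hx : x i <;> simp [graftAux, leafSet, hx, ih₀, ih₁, Set.inter_assoc]

theorem cost_graftAux (g : Set (ι → Bool) → DTree ι L') (t : DTree ι L) (x : ι → Bool)
    (A : Set (ι → Bool)) :
    (graftAux g A t).cost x = t.cost x + (g (A ∩ t.leafSet x)).cost x := by
  induction t generalizing A with
  | leaf => simp [graftAux, leafSet, cost]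
  | node i t₀ t₁ ih₀ ih₁ =>
    cases hx : x i <;> simp [graftAux, leafSet, cost, hx, ih₀, ih₁, Set.inter_assoc] <;> ring

theorem leafSet_graft (t : DTree ι L) (g : Set (ι → Bool) → DTree ι L') (x : ι → Bool) :
    (t.graft g).leafSet x = t.leafSet x ∩ (g (t.leafSet x)).leafSet x := by
  simp [graft, leafSet_graftAux]

theorem cost_graft (t : DTree ι L) (g : Set (ι → Bool) → DTree ι L') (x : ι → Bool) :
    (t.graft g).cost x = t.cost x + (g (t.leafSet x)).cost x := by
  simp [graft, cost_graftAux]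

end DTree

namespace RandAlg

variable {ι L L' : Type}

def expect (R : RandAlg ι L) (F : DTree ι L → ℝ) : ℝ := ∑ j, R.p j * F (R.T j)

theorem expect_mono {R : RandAlg ι L} {F G : DTree ι L → ℝ} (h : ∀ t, F t ≤ G t) :
    R.expect F ≤ R.expect G :=
  Finset.sum_le_sum fun j _ => mul_le_mul_of_nonneg_left (h _) (R.p_nonneg j)

theorem expect_const (R : RandAlg ι L) (c : ℝ) : R.expect (fun _ => c) = c := by
  simp [expect, ← Finset.sum_mul, R.p_sum]

theorem expect_add_mul (R : RandAlg ι L) (F G : DTree ι L → ℝ) (c : ℝ) :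
    R.expect (fun t => F t + c * G t) = R.expect F + c * R.expect G := by
  simp only [expect, mul_add, Finset.sum_add_distrib, Finset.mul_sum]
  congr 1
  exact Finset.sum_congr rfl fun j _ => by ring

theorem expect_one_sub (R : RandAlg ι L) (F : DTree ι L → ℝ) :
    R.expect (fun t => 1 - F t) = 1 - R.expect F := by
  simpa [sub_eq_add_neg, expect_const] using expect_add_mul R (fun _ => 1) F (-1)

theorem expect_le {R : RandAlg ι L} {F : DTree ι L → ℝ} {b : ℝ} (h : ∀ t, F t ≤ b) :
    R.expect F ≤ b :=
  (expect_mono h).trans_eq (expect_const R b)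

theorem le_expect {R : RandAlg ι L} {F : DTree ι L → ℝ} {b : ℝ} (h : ∀ t, b ≤ F t) :
    b ≤ R.expect F :=
  (expect_const R b).symm.trans_le (expect_mono h)

def ofTree (t : DTree ι L) : RandAlg ι L where
  k := 1
  p _ := 1
  T _ := t
  p_nonneg _ := zero_le_one
  p_sum := by simp

@[simp] theorem expect_ofTree (t : DTree ι L) (F : DTree ι L → ℝ) :
    (ofTree t).expect F = F t :=
  show ∑ _ : Fin 1, 1 * F t = F t by simp

instance [Inhabited L] : Nonempty (RandAlg ι L) := ⟨ofTree (.leaf default)⟩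

def map (g : DTree ι L → DTree ι L') (R : RandAlg ι L) : RandAlg ι L' where
  k := R.k
  p := R.p
  T := g ∘ R.T
  p_nonneg := R.p_nonneg
  p_sum := R.p_sum

@[simp] theorem expect_map (g : DTree ι L → DTree ι L') (R : RandAlg ι L)
    (F : DTree ι L' → ℝ) : (R.map g).expect F = R.expect (F ∘ g) := rfl

def mix (c : ℝ) (hc₀ : 0 ≤ c) (hc₁ : c ≤ 1) (R₁ R₂ : RandAlg ι L) : RandAlg ι L where
  k := R₁.k + R₂.k
  p := Fin.append (fun j => c * R₁.p j) (fun j => (1 - c) * R₂.p j)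
  T := Fin.append R₁.T R₂.T
  p_nonneg j := Fin.addCases (by simpa using fun i => mul_nonneg hc₀ (R₁.p_nonneg i))
    (by simpa using fun i => mul_nonneg (sub_nonneg.2 hc₁) (R₂.p_nonneg i)) j
  p_sum := by simp [Fin.sum_univ_add, ← Finset.mul_sum, R₁.p_sum, R₂.p_sum]

theorem expect_mix (c : ℝ) (hc₀ : 0 ≤ c) (hc₁ : c ≤ 1) (R₁ R₂ : RandAlg ι L)
    (F : DTree ι L → ℝ) :
    (mix c hc₀ hc₁ R₁ R₂).expect F = c * R₁.expect F + (1 - c) * R₂.expect F := by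
  change ∑ j : Fin (R₁.k + R₂.k), _ = _
  simp [Fin.sum_univ_add, mix, expect, Finset.mul_sum, mul_assoc]

def ofWeights (n : ℕ) (q : ℕ → ℝ) (T : ℕ → DTree ι L) (hq : ∀ d, 0 ≤ q d)
    (hq₁ : ∑ d ∈ Finset.range n, q d = 1) : RandAlg ι L where
  k := n
  p j := q j
  T j := T j
  p_nonneg _ := hq _
  p_sum := by rw [Fin.sum_univ_eq_sum_range q n, hq₁]

theorem expect_ofWeights (n : ℕ) (q : ℕ → ℝ) (T : ℕ → DTree ι L) (hq : ∀ d, 0 ≤ q d)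
    (hq₁ : ∑ d ∈ Finset.range n, q d = 1) (F : DTree ι L → ℝ) :
    (ofWeights n q T hq hq₁).expect F = ∑ d ∈ Finset.range n, q d * F (T d) :=
  Fin.sum_univ_eq_sum_range (fun d => q d * F (T d)) n

end RandAlg

section Score

variable {ι L : Type} [Fintype ι] [DecidableEq ι]
  (S : ScoreFun) (f : (ι → Bool) → Bool) (μ : (ι → Bool) → ℝ)

noncomputable def setScore (A : Set (ι → Bool)) : ℝ :=
  S.φ (mass μ (A ∩ {y | f y = true}) / mass μ A)

noncomputable def treeScore (t : DTree ι L) : ℝ := ∑ x, μ x * leafScore S f μ t x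

noncomputable def treeCost (t : DTree ι L) : ℝ := ∑ x, μ x * (t.cost x : ℝ)

noncomputable def treeDScore (α : ℝ) (t : DTree ι L) : ℝ :=
  ∑ x, μ x * (leafScore S f μ t x * Real.exp (-(α * (t.cost x : ℝ))))

theorem algScore_eq_expect (R : RandAlg ι L) :
    algScore S f μ R = R.expect (treeScore S f μ) := rfl

theorem expCost_eq_expect (R : RandAlg ι L) : expCost μ R = R.expect (treeCost μ) := rfl

theorem dScore_eq_expect (α : ℝ) (R : RandAlg ι L) :
    dScore S f μ α R = R.expect (treeDScore S f μ α) := rfl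

variable {S f μ}

theorem leafScore_eq_setScore (t : DTree ι L) (x : ι → Bool) :
    leafScore S f μ t x = setScore S f μ (t.leafSet x) := rfl

theorem setScore_mem_Icc (hμ : ∀ x, 0 ≤ μ x) (A : Set (ι → Bool)) :
    setScore S f μ A ∈ Set.Icc (1 / 2 : ℝ) 1 := by
  have h : mass μ (A ∩ {y | f y = true}) / mass μ A ∈ Set.Icc (0 : ℝ) 1 :=
    ⟨div_nonneg (mass_nonneg hμ _) (mass_nonneg hμ _),
      div_le_one_of_le₀ (mass_mono hμ Set.inter_subset_left) (mass_nonneg hμ _)⟩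
  exact ⟨S.half_le _ h, S.le_one _ h⟩

theorem leafScore_mem_Icc (hμ : ∀ x, 0 ≤ μ x) (t : DTree ι L) (x : ι → Bool) :
    leafScore S f μ t x ∈ Set.Icc (1 / 2 : ℝ) 1 :=
  setScore_mem_Icc hμ _

theorem setScore_singleton (x : ι → Bool) : setScore S f μ {x} = 1 := by
  unfold setScore
  cases hx : f x
  · have : ({x} : Set (ι → Bool)) ∩ {y | f y = true} = ∅ := by ext y; simp_all
    simp [this, S.map_zero]
  · have : ({x} : Set (ι → Bool)) ∩ {y | f y = true} = {x} := by ext y; simp_all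
    rw [this, mass_singleton]
    rcases eq_or_ne (μ x) 0 with h | h
    · simp [h, S.map_zero]
    · rw [div_self h, S.map_one]

theorem setScore_univ (hμ₁ : ∑ x, μ x = 1) :
    setScore S f μ Set.univ = S.φ (mass μ {y | f y = true}) := by
  simp [setScore, hμ₁]

theorem treeCost_nonneg (hμ : ∀ x, 0 ≤ μ x) (t : DTree ι L) : 0 ≤ treeCost μ t :=
  Finset.sum_nonneg fun x _ => mul_nonneg (hμ x) (Nat.cast_nonneg _)

theorem treeScore_nonneg (hμ : ∀ x, 0 ≤ μ x) (t : DTree ι L) : 0 ≤ treeScore S f μ t :=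
  Finset.sum_nonneg fun x _ =>
    mul_nonneg (hμ x) (by linarith [(leafScore_mem_Icc (S := S) (f := f) hμ t x).1])

theorem treeScore_le_one (hμ : ∀ x, 0 ≤ μ x) (hμ₁ : ∑ x, μ x = 1) (t : DTree ι L) :
    treeScore S f μ t ≤ 1 :=
  hμ₁ ▸ Finset.sum_le_sum fun x _ => mul_le_of_le_one_right (hμ x) (leafScore_mem_Icc hμ t x).2

theorem treeScore_leaf (hμ₁ : ∑ x, μ x = 1) (l : L) :
    treeScore S f μ (.leaf l : DTree ι L) = S.φ (mass μ {y | f y = true}) := by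
  simp [treeScore, leafScore_eq_setScore, DTree.leafSet, setScore_univ hμ₁, ← Finset.sum_mul,
    hμ₁]

theorem treeCost_leaf (l : L) : treeCost μ (.leaf l : DTree ι L) = 0 := by
  simp [treeCost, DTree.cost]

theorem treeScore_fullTree (hμ₁ : ∑ x, μ x = 1) :
    treeScore S f μ (DTree.fullTree : DTree ι Unit) = 1 := by
  simp [treeScore, leafScore_eq_setScore, DTree.leafSet_fullTree, setScore_singleton, hμ₁]

theorem trivialScore_mem_Icc (hμ : ∀ x, 0 ≤ μ x) (hμ₁ : ∑ x, μ x = 1) :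
    S.φ (mass μ {y | f y = true}) ∈ Set.Icc (1 / 2 : ℝ) 1 :=
  setScore_univ (S := S) (f := f) hμ₁ ▸ setScore_mem_Icc hμ _

theorem treeDScore_leaf (hμ₁ : ∑ x, μ x = 1) (α : ℝ) (l : L) :
    treeDScore S f μ α (.leaf l : DTree ι L) = S.φ (mass μ {y | f y = true}) := by
  simp [treeDScore, leafScore_eq_setScore, DTree.leafSet, DTree.cost, setScore_univ hμ₁,
    ← Finset.sum_mul, hμ₁]

/-- A tree that makes a query discounts every leaf by at least `e^{-α}`; one that does not
earns the trivial score. -/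
theorem treeDScore_le_max (hμ : ∀ x, 0 ≤ μ x) (hμ₁ : ∑ x, μ x = 1) {α : ℝ} (hα : 0 ≤ α)
    (t : DTree ι L) :
    treeDScore S f μ α t ≤ max (S.φ (mass μ {y | f y = true})) (Real.exp (-α)) := by
  cases t with
  | leaf l => exact le_max_of_le_left (treeDScore_leaf hμ₁ α l).le
  | node i t₀ t₁ =>
    refine le_max_of_le_right ?_
    rw [← one_mul (Real.exp (-α)), ← hμ₁, Finset.sum_mul]
    refine Finset.sum_le_sum fun x _ => ?_
    have hs := leafScore_mem_Icc (S := S) (f := f) hμ (DTree.node i t₀ t₁) x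
    have hc : (1 : ℝ) ≤ (DTree.node i t₀ t₁).cost x := by
      exact_mod_cast Nat.le_add_left 1 _
    have he : Real.exp (-(α * (DTree.node i t₀ t₁).cost x)) ≤ Real.exp (-α) :=
      Real.exp_le_exp.2 (by nlinarith)
    exact mul_le_mul_of_nonneg_left
      ((mul_le_of_le_one_left (Real.exp_pos _).le hs.2).trans he) (hμ x)

end Score

section Completion

variable {ι L : Type} [Fintype ι] [DecidableEq ι]
  {S : ScoreFun} {f : (ι → Bool) → Bool} {μ : (ι → Bool) → ℝ}

/-- There are only finitely many sets of inputs. -/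
theorem exists_impurity_gap (hμ : ∀ x, 0 ≤ μ x) :
    ∃ δ > 0, ∀ A, setScore S f μ A ≠ 1 → δ ≤ 1 - setScore S f μ A := by
  classical
  obtain ⟨A₀, hA₀⟩ := Finite.exists_min fun A : Set (ι → Bool) =>
    if setScore S f μ A = 1 then 1 else 1 - setScore S f μ A
  refine ⟨_, ?_, fun A hA => (hA₀ A).trans_eq (if_neg hA)⟩
  split_ifs with h
  · exact one_pos
  · exact sub_pos.2 (lt_of_le_of_ne (setScore_mem_Icc hμ A₀).2 h)

variable (S f μ) in
open Classical in
noncomputable def complete (t : DTree ι L) : DTree ι Unit :=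
  t.graft fun A => if setScore S f μ A = 1 then .leaf () else DTree.fullTree

theorem leafScore_complete (t : DTree ι L) (x : ι → Bool) :
    leafScore S f μ (complete S f μ t) x = 1 := by
  rw [leafScore_eq_setScore, complete, DTree.leafSet_graft]
  split_ifs with h
  · simpa [DTree.leafSet] using h
  · rw [DTree.leafSet_fullTree, Set.inter_eq_right.2
      (Set.singleton_subset_iff.2 (t.mem_leafSet_self x)), setScore_singleton]

open Classical in
theorem cost_complete (t : DTree ι L) (x : ι → Bool) :
    (complete S f μ t).cost x =
      t.cost x + if leafScore S f μ t x = 1 then 0 else Fintype.card ι := by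
  rw [complete, DTree.cost_graft, leafScore_eq_setScore]
  split_ifs <;> simp [DTree.cost, DTree.cost_fullTree]

theorem exists_treeCost_complete_le (hμ : ∀ x, 0 ≤ μ x) (hμ₁ : ∑ x, μ x = 1) :
    ∃ K, 0 ≤ K ∧ ∀ t : DTree ι L,
      treeCost μ (complete S f μ t) ≤ treeCost μ t + K * (1 - treeScore S f μ t) := by
  obtain ⟨δ, hδ, hgap⟩ := exists_impurity_gap (S := S) (f := f) hμ
  set K := (Fintype.card ι : ℝ) / δ
  refine ⟨K, by positivity, fun t => ?_⟩
  have hcost : ∀ x, ((complete S f μ t).cost x : ℝ) ≤ t.cost x + K * (1 - leafScore S f μ t x) := by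
    intro x
    rw [cost_complete]
    split_ifs with h
    · simp [h]
    · have hK : (Fintype.card ι : ℝ) ≤ K * (1 - leafScore S f μ t x) := by
        rw [div_mul_eq_mul_div, le_div_iff₀ hδ]
        exact mul_le_mul_of_nonneg_left (hgap _ h) (Nat.cast_nonneg _)
      push_cast
      linarith
  calc treeCost μ (complete S f μ t)
      ≤ ∑ x, μ x * (t.cost x + K * (1 - leafScore S f μ t x)) :=
        Finset.sum_le_sum fun x _ => mul_le_mul_of_nonneg_left (hcost x) (hμ x)
    _ = treeCost μ t + K * (∑ x, μ x - treeScore S f μ t) := by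
        simp only [treeCost, treeScore, Finset.mul_sum, ← Finset.sum_sub_distrib,
          ← Finset.sum_add_distrib]
        exact Finset.sum_congr rfl fun x _ => by ring
    _ = treeCost μ t + K * (1 - treeScore S f μ t) := by rw [hμ₁]

end Completion

section Stopping

/-- Distribution of a geometric random depth `D` with ratio `ρ`, capped at `n`:
`P(D ≥ d) = ρ ^ d` for `d ≤ n`. -/
noncomputable def geomWeight (ρ : ℝ) (n d : ℕ) : ℝ :=
  if d = n then ρ ^ n else (1 - ρ) * ρ ^ d

variable {ρ : ℝ}

theorem geomWeight_nonneg (hρ₀ : 0 ≤ ρ) (hρ₁ : ρ ≤ 1) (n d : ℕ) : 0 ≤ geomWeight ρ n d := by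
  have := sub_nonneg.2 hρ₁
  unfold geomWeight
  split_ifs <;> positivity

theorem sum_Ico_geomWeight {c n : ℕ} (hc : c ≤ n) :
    ∑ d ∈ Finset.Ico c (n + 1), geomWeight ρ n d = ρ ^ c := by
  have h : ∀ d ∈ Finset.Ico c n, geomWeight ρ n d = (1 - ρ) * ρ ^ d :=
    fun d hd => if_neg (Finset.mem_Ico.1 hd).2.ne
  rw [Finset.sum_Ico_succ_top hc, Finset.sum_congr rfl h, ← Finset.mul_sum, geomWeight,
    if_pos rfl]
  linear_combination -geom_sum_Ico_mul ρ hc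

theorem sum_geomWeight (n : ℕ) : ∑ d ∈ Finset.range (n + 1), geomWeight ρ n d = 1 := by
  have := sum_Ico_geomWeight (ρ := ρ) (Nat.zero_le n)
  rwa [pow_zero, ← Finset.range_eq_Ico] at this

theorem sum_geomWeight_mul_ite {c n : ℕ} (hc : c ≤ n) (a b : ℝ) :
    ∑ d ∈ Finset.range (n + 1), geomWeight ρ n d * (if c ≤ d then a else b) =
      ρ ^ c * a + (1 - ρ ^ c) * b := by
  have hsplit := Finset.sum_range_add_sum_Ico (geomWeight ρ n) (Nat.le_succ_of_le hc)
  rw [sum_Ico_geomWeight hc, sum_geomWeight] at hsplit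
  have h₁ : ∀ d ∈ Finset.range c,
      geomWeight ρ n d * (if c ≤ d then a else b) = geomWeight ρ n d * b :=
    fun d hd => by rw [if_neg (not_le.2 (Finset.mem_range.1 hd))]
  have h₂ : ∀ d ∈ Finset.Ico c (n + 1),
      geomWeight ρ n d * (if c ≤ d then a else b) = geomWeight ρ n d * a :=
    fun d hd => by rw [if_pos (Finset.mem_Ico.1 hd).1]
  rw [← Finset.sum_range_add_sum_Ico _ (Nat.le_succ_of_le hc), Finset.sum_congr rfl h₁,
    Finset.sum_congr rfl h₂, ← Finset.sum_mul, ← Finset.sum_mul, sum_Ico_geomWeight hc]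
  linear_combination b * hsplit

theorem cast_min_eq_sum (c d : ℕ) :
    ((min d c : ℕ) : ℝ) = ∑ k ∈ Finset.range c, if k + 1 ≤ d then (1 : ℝ) else 0 := by
  induction c with
  | zero => simp
  | succ c ih =>
    rw [Finset.sum_range_succ, ← ih]
    split_ifs with h
    · rw [show min d (c + 1) = min d c + 1 by omega]
      push_cast
      ring
    · rw [show min d (c + 1) = min d c by omega, add_zero]

theorem sum_geomWeight_mul_min_le (hρ₀ : 0 ≤ ρ) (hρ₁ : ρ ≤ 1) {c n : ℕ} (hc : c ≤ n) :
    (1 - ρ) * ∑ d ∈ Finset.range (n + 1), geomWeight ρ n d * ((min d c : ℕ) : ℝ) ≤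
      1 - ρ ^ c := by
  have htail : ∑ d ∈ Finset.range (n + 1), geomWeight ρ n d * ((min d c : ℕ) : ℝ) =
      ∑ k ∈ Finset.range c, ρ ^ (k + 1) := by
    simp only [cast_min_eq_sum, Finset.mul_sum]
    rw [Finset.sum_comm]
    refine Finset.sum_congr rfl fun k hk => ?_
    rw [sum_geomWeight_mul_ite (by simp at hk; omega)]
    ring
  rw [htail, ← mul_neg_geom_sum, Finset.mul_sum, Finset.mul_sum]
  exact Finset.sum_le_sum fun k _ => mul_le_mul_of_nonneg_left
    (pow_le_pow_of_le_one hρ₀ hρ₁ k.le_succ) (sub_nonneg.2 hρ₁)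

/-- For one input whose leaf has depth `c` and score `s`: stopping at the
capped geometric depth `D` keeps score `s` with probability `ρ ^ c` and at least `1/2`
otherwise, while the expected number of queries `E[min D c]` is at most `(1 - ρ^c)/(1 - ρ)`. -/
theorem le_sum_geomWeight_mul (hρ₀ : 0 ≤ ρ) (hρ₁ : ρ ≤ 1) {c n : ℕ} (hc : c ≤ n) {s : ℝ}
    {g : ℕ → ℝ} (hg : ∀ d, 1 / 2 ≤ g d) (hgs : ∀ d, c ≤ d → g d = s) :
    ρ ^ c * s ≤ ∑ d ∈ Finset.range (n + 1),
      geomWeight ρ n d * (g d - (1 - ρ) / 2 * ((min d c : ℕ) : ℝ)) := by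
  have hscore : ρ ^ c * s + (1 - ρ ^ c) * (1 / 2) ≤
      ∑ d ∈ Finset.range (n + 1), geomWeight ρ n d * g d := by
    rw [← sum_geomWeight_mul_ite hc]
    refine Finset.sum_le_sum fun d _ => mul_le_mul_of_nonneg_left ?_ (geomWeight_nonneg hρ₀ hρ₁ n d)
    split_ifs with h
    · exact (hgs d h).ge
    · exact hg d
  have hcost := sum_geomWeight_mul_min_le hρ₀ hρ₁ hc
  have hsplit : ∑ d ∈ Finset.range (n + 1),
      geomWeight ρ n d * (g d - (1 - ρ) / 2 * ((min d c : ℕ) : ℝ)) =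
      ∑ d ∈ Finset.range (n + 1), geomWeight ρ n d * g d -
        1 / 2 * ((1 - ρ) * ∑ d ∈ Finset.range (n + 1), geomWeight ρ n d * ((min d c : ℕ) : ℝ)) := by
    simp only [Finset.mul_sum, ← Finset.sum_sub_distrib]
    exact Finset.sum_congr rfl fun d _ => by ring
  rw [hsplit]
  linarith

variable {ι : Type} [Fintype ι] [DecidableEq ι]
  {S : ScoreFun} {f : (ι → Bool) → Bool} {μ : (ι → Bool) → ℝ}

/-- Stopping `t` at a capped geometric depth with ratio `e^{-α}` converts its discounted score into
score, paying `(1 - e^{-α})/2` per expected query. -/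
theorem exists_randAlg_treeDScore_le (hμ : ∀ x, 0 ≤ μ x) {α : ℝ} (hα : 0 < α)
    (t : DTree ι Unit) : ∃ R : RandAlg ι Unit,
      treeDScore S f μ α t ≤ algScore S f μ R - (1 - Real.exp (-α)) / 2 * expCost μ R := by
  set ρ := Real.exp (-α)
  have hρ₀ : 0 ≤ ρ := (Real.exp_pos _).le
  have hρ₁ : ρ ≤ 1 := Real.exp_le_one_iff.2 (by linarith)
  set n := t.depth
  refine ⟨RandAlg.ofWeights (n + 1) (geomWeight ρ n) (fun d => t.trunc d)
    (geomWeight_nonneg hρ₀ hρ₁ n) (sum_geomWeight n), ?_⟩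
  rw [algScore_eq_expect, expCost_eq_expect, sub_eq_add_neg, neg_mul_eq_neg_mul,
    ← RandAlg.expect_add_mul, RandAlg.expect_ofWeights]
  have hx : ∀ x, μ x * (leafScore S f μ t x * Real.exp (-(α * (t.cost x : ℝ)))) ≤
      μ x * ∑ d ∈ Finset.range (n + 1), geomWeight ρ n d *
        (leafScore S f μ (t.trunc d) x - (1 - ρ) / 2 * ((min d (t.cost x) : ℕ) : ℝ)) := by
    intro x
    refine mul_le_mul_of_nonneg_left ?_ (hμ x)
    have hρc : Real.exp (-(α * (t.cost x : ℝ))) = ρ ^ t.cost x := by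
      rw [← Real.exp_nat_mul]
      ring_nf
    rw [hρc, mul_comm]
    exact le_sum_geomWeight_mul hρ₀ hρ₁ (t.cost_le_depth x)
      (fun _ => (leafScore_mem_Icc hμ _ x).1)
      (fun _ hd => by rw [leafScore_eq_setScore, DTree.leafSet_trunc hd, leafScore_eq_setScore])
  refine (Finset.sum_le_sum fun x _ => hx x).trans_eq ?_
  simp only [treeScore, treeCost, DTree.cost_trunc, Finset.mul_sum, mul_add,
    ← Finset.sum_add_distrib]
  rw [Finset.sum_comm]
  exact Finset.sum_congr rfl fun d _ => Finset.sum_congr rfl fun x _ => by ring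

end Stopping

theorem ConvexOn.exists_supporting_line {s : Set ℝ} {B : ℝ → ℝ} (hB : ConvexOn ℝ s B) {γ : ℝ}
    (hγ : γ ∈ s) (hlt : ∃ x ∈ s, x < γ) (hbdd : BddAbove (slope B γ '' {x ∈ s | x < γ})) :
    ∃ σ, ∀ w ∈ s, B γ + σ * (w - γ) ≤ B w := by
  obtain ⟨x₀, hx₀, hx₀γ⟩ := hlt
  refine ⟨sSup (slope B γ '' {x ∈ s | x < γ}), fun w hw => ?_⟩
  rcases lt_trichotomy w γ with hwγ | rfl | hγw
  · have h := le_csSup hbdd ⟨w, ⟨hw, hwγ⟩, rfl⟩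
    rw [slope_def_field, div_le_iff_of_neg (sub_neg.2 hwγ)] at h
    linarith
  · simp
  · have h : sSup (slope B γ '' {x ∈ s | x < γ}) ≤ slope B γ w :=
      csSup_le ⟨_, x₀, ⟨hx₀, hx₀γ⟩, rfl⟩ fun _ ⟨x, ⟨hx, hxγ⟩, hslope⟩ =>
        hslope ▸ hB.slope_mono hγ ⟨hx, hxγ.ne⟩ ⟨hw, hγw.ne'⟩ (hxγ.trans hγw).le
    rw [slope_def_field, le_div_iff₀ (sub_pos.2 hγw)] at h
    linarith

section Rdist

variable {ι : Type} [Fintype ι] [DecidableEq ι]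
  {S : ScoreFun} {f : (ι → Bool) → Bool} {μ : (ι → Bool) → ℝ}

theorem Rdist_le (hμ : ∀ x, 0 ≤ μ x) {x : ℝ} (R : RandAlg ι Unit)
    (h : x ≤ algScore S f μ R) : Rdist S f μ x ≤ expCost μ R :=
  csInf_le ⟨0, by rintro _ ⟨R, -, rfl⟩; exact RandAlg.le_expect (treeCost_nonneg hμ)⟩ ⟨R, h, rfl⟩

theorem Rdist_set_nonempty (hμ₁ : ∑ x, μ x = 1) {x : ℝ} (hx : x ≤ 1) :
    {c | ∃ R : RandAlg ι Unit, x ≤ algScore S f μ R ∧ expCost μ R = c}.Nonempty :=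
  ⟨_, RandAlg.ofTree DTree.fullTree,
    by rwa [algScore_eq_expect, RandAlg.expect_ofTree, treeScore_fullTree hμ₁], rfl⟩

theorem le_Rdist (hμ₁ : ∑ x, μ x = 1) {x b : ℝ} (hx : x ≤ 1)
    (h : ∀ R : RandAlg ι Unit, x ≤ algScore S f μ R → b ≤ expCost μ R) : b ≤ Rdist S f μ x :=
  le_csInf (Rdist_set_nonempty hμ₁ hx) fun _ ⟨R, hR, hc⟩ => hc ▸ h R hR

theorem Rdist_trivialScore_nonpos (hμ : ∀ x, 0 ≤ μ x) (hμ₁ : ∑ x, μ x = 1) :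
    Rdist S f μ (S.φ (mass μ {y | f y = true})) ≤ 0 := by
  have h := Rdist_le (S := S) (f := f) hμ (RandAlg.ofTree (.leaf ()))
    (by rw [algScore_eq_expect, RandAlg.expect_ofTree, treeScore_leaf hμ₁])
  rwa [expCost_eq_expect, RandAlg.expect_ofTree, treeCost_leaf] at h

theorem scost_nonneg (hμ : ∀ x, 0 ≤ μ x) (R : RandAlg ι Unit) : 0 ≤ scost S f μ R :=
  div_nonneg (RandAlg.le_expect fun t => Finset.sum_nonneg fun x _ => mul_nonneg (hμ x)
      (mul_nonneg (by linarith [(leafScore_mem_Icc (S := S) (f := f) hμ t x).1])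
        (Nat.cast_nonneg _)))
    (RandAlg.le_expect (treeScore_nonneg hμ))

theorem scost_le_expCost_div (hμ : ∀ x, 0 ≤ μ x) (R : RandAlg ι Unit) :
    scost S f μ R ≤ expCost μ R / algScore S f μ R :=
  div_le_div_of_nonneg_right
    (RandAlg.expect_mono (F := fun t => ∑ x, μ x * (leafScore S f μ t x * (t.cost x : ℝ)))
      fun t => Finset.sum_le_sum fun x _ => mul_le_mul_of_nonneg_left
        (mul_le_of_le_one_left (Nat.cast_nonneg _) (leafScore_mem_Icc hμ t x).2) (hμ x))
    (RandAlg.le_expect (treeScore_nonneg hμ))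

/-- Scores are at least `1/2`, so weighting the cost by the score loses at most a factor `2`. -/
theorem sRdist_le_two_mul_Rdist (hμ : ∀ x, 0 ≤ μ x) (hμ₁ : ∑ x, μ x = 1) {γ : ℝ}
    (hγ₀ : S.φ (mass μ {y | f y = true}) ≤ γ) (hγ₁ : γ ≤ 1) :
    sRdist S f μ γ ≤ 2 * Rdist S f μ γ := by
  have hγ : 1 / 2 ≤ γ := (trivialScore_mem_Icc hμ hμ₁).1.trans hγ₀
  suffices sRdist S f μ γ / 2 ≤ Rdist S f μ γ by linarith
  refine le_Rdist hμ₁ hγ₁ fun R hR => ?_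
  have hpos : 0 < algScore S f μ R := by linarith
  have hcost : 0 ≤ expCost μ R := RandAlg.le_expect (treeCost_nonneg hμ)
  have hs : sRdist S f μ γ ≤ scost S f μ R :=
    csInf_le ⟨0, by rintro _ ⟨R, -, rfl⟩; exact scost_nonneg hμ R⟩ ⟨R, hR, rfl⟩
  have hdiv : expCost μ R / algScore S f μ R ≤ 2 * expCost μ R := by
    rw [div_le_iff₀ hpos]
    nlinarith
  linarith [scost_le_expCost_div (S := S) (f := f) hμ R]

theorem convexOn_Rdist (hμ : ∀ x, 0 ≤ μ x) (hμ₁ : ∑ x, μ x = 1) :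
    ConvexOn ℝ (Set.Iic 1) (Rdist S f μ) := by
  refine ⟨convex_Iic 1, fun x hx y hy a b ha hb hab => ?_⟩
  obtain rfl : b = 1 - a := by linarith
  simp only [smul_eq_mul]
  refine le_of_forall_pos_le_add fun ε hε => ?_
  obtain ⟨_, ⟨R₁, hR₁, rfl⟩, hC₁⟩ := Real.lt_sInf_add_pos (Rdist_set_nonempty hμ₁ hx) hε
  obtain ⟨_, ⟨R₂, hR₂, rfl⟩, hC₂⟩ := Real.lt_sInf_add_pos (Rdist_set_nonempty hμ₁ hy) hε
  have hmix := Rdist_le (S := S) (f := f) (x := a * x + (1 - a) * y) hμ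
    (RandAlg.mix a ha (by linarith) R₁ R₂) (by
      rw [algScore_eq_expect, RandAlg.expect_mix, ← algScore_eq_expect, ← algScore_eq_expect]
      gcongr)
  rw [expCost_eq_expect, RandAlg.expect_mix, ← expCost_eq_expect, ← expCost_eq_expect] at hmix
  change expCost μ R₁ < Rdist S f μ x + ε at hC₁
  change expCost μ R₂ < Rdist S f μ y + ε at hC₂
  nlinarith [mul_le_mul_of_nonneg_left hC₁.le ha, mul_le_mul_of_nonneg_left hC₂.le hb]

/-- Completing the impure leaves of an algorithm of score `x` costs `O(1 - x)` more queries. -/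
theorem exists_Rdist_one_le (hμ : ∀ x, 0 ≤ μ x) (hμ₁ : ∑ x, μ x = 1) :
    ∃ K, ∀ x ≤ 1, Rdist S f μ 1 ≤ Rdist S f μ x + K * (1 - x) := by
  obtain ⟨K, hK, hcomplete⟩ := exists_treeCost_complete_le (S := S) (f := f) (L := Unit) hμ hμ₁
  refine ⟨K, fun x hx => sub_le_iff_le_add.1 (le_Rdist hμ₁ hx fun R hR => ?_)⟩
  have hscore : 1 ≤ algScore S f μ (R.map (complete S f μ)) := by
    simp [algScore_eq_expect, Function.comp_def, treeScore, leafScore_complete, hμ₁,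
      RandAlg.expect_const]
  have hcost : expCost μ (R.map (complete S f μ)) ≤
      expCost μ R + K * (1 - algScore S f μ R) := by
    rw [expCost_eq_expect, RandAlg.expect_map, algScore_eq_expect, expCost_eq_expect,
      ← RandAlg.expect_one_sub, ← RandAlg.expect_add_mul]
    exact RandAlg.expect_mono hcomplete
  have := Rdist_le hμ _ hscore
  nlinarith

theorem exists_Rdist_supporting_line (hμ : ∀ x, 0 ≤ μ x) (hμ₁ : ∑ x, μ x = 1) {γ : ℝ}
    (hγ₁ : γ ≤ 1) : ∃ σ, ∀ w ≤ 1, Rdist S f μ γ + σ * (w - γ) ≤ Rdist S f μ w := by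
  obtain ⟨K, hK⟩ := exists_Rdist_one_le (S := S) (f := f) hμ hμ₁
  have hconv := convexOn_Rdist (S := S) (f := f) hμ hμ₁
  refine hconv.exists_supporting_line hγ₁ ⟨γ - 1, by simp; linarith, by linarith⟩ ⟨K, ?_⟩
  rintro _ ⟨x, ⟨hx, hxγ⟩, rfl⟩
  have hx₁ : x < 1 := hxγ.trans_le hγ₁
  rw [slope_comm]
  calc slope (Rdist S f μ) x γ ≤ slope (Rdist S f μ) x 1 :=
        hconv.slope_mono hx ⟨hγ₁, hxγ.ne'⟩ ⟨Set.mem_Iic.2 le_rfl, hx₁.ne'⟩ hγ₁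
    _ ≤ K := by
        rw [slope_def_field, div_le_iff₀ (sub_pos.2 hx₁)]
        linarith [hK x hx]

end Rdist

section Discount

variable {ι : Type} [Fintype ι] [DecidableEq ι]
  {S : ScoreFun} {f : (ι → Bool) → Bool} {μ : (ι → Bool) → ℝ}

theorem DS_le {α b : ℝ} (h : ∀ t : DTree ι Unit, treeDScore S f μ α t ≤ b) :
    DS S f μ α ≤ b :=
  ciSup_le fun _ => RandAlg.expect_le h

theorem trivialScore_le_DS (hμ : ∀ x, 0 ≤ μ x) (hμ₁ : ∑ x, μ x = 1) {α : ℝ} (hα : 0 ≤ α) :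
    S.φ (mass μ {y | f y = true}) ≤ DS S f μ α :=
  le_ciSup_of_le ⟨_, Set.forall_mem_range.2 fun _ =>
      RandAlg.expect_le (treeDScore_le_max hμ hμ₁ hα)⟩
    (RandAlg.ofTree (.leaf ())) (by rw [dScore_eq_expect, RandAlg.expect_ofTree,
      treeDScore_leaf hμ₁])

theorem sub_le_log_div {a b : ℝ} (hb : 0 < b) (hba : b ≤ a) (ha : a ≤ 1) :
    a - b ≤ Real.log (a / b) := by
  have ha₀ : 0 < a := hb.trans_le hba
  have h := Real.one_sub_inv_le_log_of_pos (div_pos ha₀ hb)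
  rw [inv_div, one_sub_div ha₀.ne'] at h
  refine le_trans ?_ h
  rw [le_div_iff₀ ha₀]
  nlinarith

theorem two_mul_Rdist_le_log_DS_one (hμ : ∀ x, 0 ≤ μ x) (hμ₁ : ∑ x, μ x = 1) {γ : ℝ}
    (hγ₀ : S.φ (mass μ {y | f y = true}) ≤ γ) (hγ₁ : γ ≤ 1)
    (hD : Rdist S f μ γ ≤ 4 * (γ - S.φ (mass μ {y | f y = true}))) :
    2 * Rdist S f μ γ ≤ 8 / 1 * Real.log (γ / DS S f μ 1) := by
  have hφ := trivialScore_mem_Icc (S := S) (f := f) hμ hμ₁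
  have he : Real.exp (-1) < 1 / 2 := by
    rw [Real.exp_neg, inv_lt_comm₀ (Real.exp_pos 1) (by norm_num)]
    linarith [Real.exp_one_gt_d9]
  have hDS : DS S f μ 1 ≤ S.φ (mass μ {y | f y = true}) :=
    DS_le fun t => (treeDScore_le_max hμ hμ₁ zero_le_one t).trans
      (max_le le_rfl (by linarith [hφ.1]))
  have hDSpos : 0 < DS S f μ 1 := by
    linarith [trivialScore_le_DS (S := S) (f := f) hμ hμ₁ zero_le_one, hφ.1]
  have := sub_le_log_div hDSpos (hDS.trans hγ₀) hγ₁
  linarith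

theorem DS_le_of_supporting_line (hμ : ∀ x, 0 ≤ μ x) (hμ₁ : ∑ x, μ x = 1) {γ σ α : ℝ}
    (hα : 0 < α) (hσα : σ * (1 - Real.exp (-α)) = 2)
    (hline : ∀ w ≤ 1, Rdist S f μ γ + σ * (w - γ) ≤ Rdist S f μ w) :
    DS S f μ α ≤ γ - Rdist S f μ γ / σ := by
  have hσ : 0 < σ := by
    have : 0 < 1 - Real.exp (-α) := sub_pos.2 (Real.exp_lt_one_iff.2 (by linarith))
    nlinarith
  refine DS_le fun t => ?_
  obtain ⟨R, hR⟩ := exists_randAlg_treeDScore_le (S := S) (f := f) hμ hα t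
  have hline' := hline (algScore S f μ R) (RandAlg.expect_le (treeScore_le_one hμ hμ₁))
  have hcost := Rdist_le (S := S) (f := f) hμ R le_rfl
  have hκ : (1 - Real.exp (-α)) / 2 = σ⁻¹ := by field_simp; linarith
  have h := mul_le_mul_of_nonneg_left (hline'.trans hcost) (inv_nonneg.2 hσ.le)
  rw [mul_add, ← mul_assoc, inv_mul_cancel₀ hσ.ne', one_mul] at h
  rw [hκ] at hR
  rw [div_eq_inv_mul]
  linarith

theorem exists_discount_of_supporting_line (hμ : ∀ x, 0 ≤ μ x) (hμ₁ : ∑ x, μ x = 1)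
    {γ σ : ℝ} (hγ₁ : γ ≤ 1) (hσ : 4 < σ) (hD : 0 ≤ Rdist S f μ γ)
    (hline : ∀ w ≤ 1, Rdist S f μ γ + σ * (w - γ) ≤ Rdist S f μ w) :
    ∃ α, 0 < α ∧ 2 * Rdist S f μ γ ≤ 8 / α * Real.log (γ / DS S f μ α) := by
  have hσ₂ : 0 < σ - 2 := by linarith
  set α := Real.log (σ / (σ - 2))
  have hα : 0 < α := Real.log_pos ((one_lt_div hσ₂).2 (by linarith))
  have hσα : σ * (1 - Real.exp (-α)) = 2 := by
    rw [Real.exp_neg, Real.exp_log (by positivity), inv_div]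
    field_simp
    ring
  have hDS := DS_le_of_supporting_line hμ hμ₁ hα hσα hline
  have hDSpos : 0 < DS S f μ α := by
    linarith [trivialScore_le_DS (S := S) (f := f) hμ hμ₁ hα.le,
      (trivialScore_mem_Icc (S := S) (f := f) hμ hμ₁).1]
  have hDσ : 0 ≤ Rdist S f μ γ / σ := div_nonneg hD (by linarith)
  have hlog : Rdist S f μ γ / σ ≤ Real.log (γ / DS S f μ α) := by
    linarith [sub_le_log_div hDSpos (by linarith) hγ₁]
  have hασ : α * σ ≤ 4 := by
    have h := Real.log_le_sub_one_of_pos (show 0 < σ / (σ - 2) by positivity)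
    rw [div_sub_one hσ₂.ne', le_div_iff₀ hσ₂] at h
    nlinarith
  refine ⟨α, hα, le_trans ?_ (mul_le_mul_of_nonneg_left hlog (by positivity))⟩
  rw [div_mul_div_comm, le_div_iff₀ (by positivity)]
  nlinarith

end Discount

/-- **Equivalence lemma, upper bound**: there is a universal constant `C` such that for every
score function, function `f`, distribution `μ` and `γ` at least the score of the trivial
zero-query algorithm, there is a discount factor `α* > 0` with
`sR̄̄_γ^μ(f) ≤ (C/α*)·ln(γ / DS_{α*}^μ(f))`. -/
theorem equivalence_lemma_upper_bound :
    ∃ C : ℝ, 0 < C ∧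
      ∀ (m : ℕ) (S : ScoreFun) (X : Set (Fin m → Bool)) (f : (Fin m → Bool) → Bool)
        (μ : InputDist (Fin m) X) (γ : ℝ),
        S.φ (mass μ.μ {y | f y = true}) ≤ γ → γ ≤ 1 →
        ∃ α : ℝ, 0 < α ∧
          sRdist S f μ.μ γ ≤ (C / α) * Real.log (γ / DS S f μ.μ α) := by
  refine ⟨8, by norm_num, fun m S X f μ γ hγ₀ hγ₁ => ?_⟩
  have hsR := sRdist_le_two_mul_Rdist μ.nonneg μ.sum_one hγ₀ hγ₁
  by_cases hD : Rdist S f μ.μ γ ≤ 4 * (γ - S.φ (mass μ.μ {y | f y = true}))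
  · exact ⟨1, one_pos, hsR.trans (two_mul_Rdist_le_log_DS_one μ.nonneg μ.sum_one hγ₀ hγ₁ hD)⟩
  · obtain ⟨σ, hline⟩ := exists_Rdist_supporting_line (S := S) (f := f) μ.nonneg μ.sum_one hγ₁
    have hlineγ₀ := hline _ (hγ₀.trans hγ₁)
    have hσ : 4 < σ := by
      nlinarith [Rdist_trivialScore_nonpos (S := S) (f := f) μ.nonneg μ.sum_one]
    obtain ⟨α, hα, h⟩ := exists_discount_of_supporting_line μ.nonneg μ.sum_one hγ₁ hσ
      (by linarith) hline
    exact ⟨α, hα, hsR.trans h⟩
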